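/- arXiv:0803.2800 — 7 statements merged into one kernel-verified Lean document; each statement's English description precedes it below -/
import Mathlib

section
/- Let 𝕂 be ℝ or ℂ and let 𝔤 be a finite-dimensional Lie algebra over 𝕂 whose centroid Cent(𝔤) is commutative (for instance, 𝔤 perfect or centerfree). Then the sum and the composite of any two nilpotent elements of Cent(𝔤) are nilpotent elements of Cent(𝔤), the sum and the composite of any two semisimple elements of Cent(𝔤) are semisimple elements of Cent(𝔤), and every f ∈ Cent(𝔤) can be written uniquely as f = n + s with n ∈ N(𝔤) and s ∈ S(𝔤); that is, Cent(𝔤) = N(𝔤) ⊕ S(𝔤) as vector spaces. -/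
/-- For a Lie algebra `L` over `K`, membership of a linear endomorphism in the centroid. -/
def InCentroid {K L : Type*} [CommRing K] [LieRing L] [LieAlgebra K L]
    (f : Module.End K L) : Prop :=
  ∀ x y : L, f ⁅x, y⁆ = ⁅x, f y⁆

/-- The centroid as a subalgebra of the endomorphism algebra. -/
def centroidSubalgebra (K L : Type*) [CommRing K] [LieRing L] [LieAlgebra K L] :
    Subalgebra K (Module.End K L) where
  carrier := {f | InCentroid f}
  add_mem' {f g} hf hg x y := by
    simp only [LinearMap.add_apply, hf x y, hg x y, lie_add]
  mul_mem' {f g} hf hg x y := by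
    simp only [Module.End.mul_apply, hg x y, hf x (g y)]
  algebraMap_mem' r x y := by
    simp [Module.algebraMap_end_apply, lie_smul]

lemma inCentroid_of_mem_adjoin {K L : Type*} [CommRing K] [LieRing L] [LieAlgebra K L]
    {f g : Module.End K L} (hf : InCentroid f) (hg : g ∈ Algebra.adjoin K {f}) :
    InCentroid g := by
  have : Algebra.adjoin K {f} ≤ centroidSubalgebra K L := by
    apply Algebra.adjoin_le
    exact Set.singleton_subset_iff.mpr hf
  exact this hg

/-- Let `𝕜` be `ℝ` or `ℂ` and `L` a finite-dimensional Lie algebra over `𝕜` with commutative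
centroid.  Then the nilpotent elements of the centroid are closed under sum and composition,
so are the semisimple elements of the centroid, and every element of the centroid decomposes
uniquely as the sum of a nilpotent and a semisimple element of the centroid. -/
theorem stmt_1 {𝕜 L : Type*} [RCLike 𝕜] [LieRing L] [LieAlgebra 𝕜 L] [FiniteDimensional 𝕜 L]
    (hcomm : ∀ f g : Module.End 𝕜 L, InCentroid f → InCentroid g → f * g = g * f) :
    (∀ f g : Module.End 𝕜 L, InCentroid f → IsNilpotent f → InCentroid g → IsNilpotent g →
      (InCentroid (f + g) ∧ IsNilpotent (f + g)) ∧
      (InCentroid (f * g) ∧ IsNilpotent (f * g))) ∧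
    (∀ f g : Module.End 𝕜 L, InCentroid f → f.IsSemisimple → InCentroid g → g.IsSemisimple →
      (InCentroid (f + g) ∧ (f + g).IsSemisimple) ∧
      (InCentroid (f * g) ∧ (f * g).IsSemisimple)) ∧
    (∀ f : Module.End 𝕜 L, InCentroid f →
      ∃! p : Module.End 𝕜 L × Module.End 𝕜 L,
        (InCentroid p.1 ∧ IsNilpotent p.1) ∧
        (InCentroid p.2 ∧ p.2.IsSemisimple) ∧
        f = p.1 + p.2) := by
  have hadd : ∀ f g : Module.End 𝕜 L, InCentroid f → InCentroid g → InCentroid (f + g) :=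
    fun f g hf hg => (centroidSubalgebra 𝕜 L).add_mem hf hg
  have hmul : ∀ f g : Module.End 𝕜 L, InCentroid f → InCentroid g → InCentroid (f * g) :=
    fun f g hf hg => (centroidSubalgebra 𝕜 L).mul_mem hf hg
  refine ⟨?_, ?_, ?_⟩
  · intro f g hf hfn hg hgn
    have hc : Commute f g := hcomm f g hf hg
    exact ⟨⟨hadd f g hf hg, hc.isNilpotent_add hfn hgn⟩,
      ⟨hmul f g hf hg, (Commute.isNilpotent_mul_left (hcomm f g hf hg) hgn)⟩⟩
  · intro f g hf hfs hg hgs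
    have hc : Commute f g := hcomm f g hf hg
    exact ⟨⟨hadd f g hf hg, hfs.add_of_commute hc hgs⟩,
      ⟨hmul f g hf hg, hfs.mul_of_commute hc hgs⟩⟩
  · intro f hf
    obtain ⟨n, hnmem, s, hsmem, hnil, hss, hfns⟩ := f.exists_isNilpotent_isSemisimple
    refine ⟨(n, s), ⟨⟨inCentroid_of_mem_adjoin hf hnmem, hnil⟩,
      ⟨inCentroid_of_mem_adjoin hf hsmem, hss⟩, hfns⟩, ?_⟩
    rintro ⟨n', s'⟩ ⟨⟨hn'c, hn'⟩, ⟨hs'c, hs'⟩, hf'⟩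
    have hnc := inCentroid_of_mem_adjoin hf hnmem
    have hsc := inCentroid_of_mem_adjoin hf hsmem
    have key : n' - n = s - s' := by
      have h : n + s = n' + s' := hfns ▸ hf'
      rw [sub_eq_sub_iff_add_eq_add, ← h]; abel
    have hnil' : IsNilpotent (n' - n) :=
      (Commute.isNilpotent_sub (hcomm n' n hn'c hnc) hn' hnil)
    have hss' : (s - s').IsSemisimple :=
      hss.sub_of_commute (hcomm s s' hsc hs'c) hs'
    have hz : n' - n = 0 := by
      rw [key] at hnil'
      have := Module.End.eq_zero_of_isNilpotent_isSemisimple hnil' hss'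
      rw [key]; exact this
    have hz2 : s - s' = 0 := key ▸ hz
    have : n' = n := by rwa [sub_eq_zero] at hz
    have h2 : s' = s := by rw [sub_eq_zero] at hz2; exact hz2.symm
    simp [this, h2]
end

section
/- Let 𝔤 be a finite-dimensional semisimple Lie algebra over a field of characteristic zero. Then every nilpotent element of the centroid Cent(𝔤) is zero, i.e. N(𝔤) = 0; consequently every element of Cent(𝔤) is semisimple. -/
section Aux

variable {K L : Type*} [Field K] [LieRing L] [LieAlgebra K L]

lemma InCentroid.mul {f g : Module.End K L} (hf : InCentroid f) (hg : InCentroid g) :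
    InCentroid (f * g) := fun x y => by
  simp only [Module.End.mul_apply, hg x y, hf x (g y)]

lemma InCentroid.add {f g : Module.End K L} (hf : InCentroid f) (hg : InCentroid g) :
    InCentroid (f + g) := fun x y => by
  simp [hf x y, hg x y]

lemma InCentroid.one : InCentroid (1 : Module.End K L) := fun _ _ => rfl

lemma InCentroid.algebraMap (c : K) : InCentroid (algebraMap K (Module.End K L) c) :=
  fun x y => by
    simp [Module.algebraMap_end_apply, lie_smul]

lemma InCentroid.of_mem_adjoin {f g : Module.End K L} (hf : InCentroid f)
    (hg : g ∈ Algebra.adjoin K {f}) : InCentroid g := by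
  induction hg using Algebra.adjoin_induction with
  | mem x hx => rwa [Set.mem_singleton_iff.mp hx]
  | algebraMap c => exact InCentroid.algebraMap c
  | add _ _ _ _ h₁ h₂ => exact h₁.add h₂
  | mul _ _ _ _ h₁ h₂ => exact h₁.mul h₂

lemma InCentroid.pow {f : Module.End K L} (hf : InCentroid f) (n : ℕ) :
    InCentroid (f ^ n) :=
  hf.of_mem_adjoin (pow_mem (Algebra.self_mem_adjoin_singleton K f) n)

variable [LieAlgebra.HasTrivialRadical K L]

lemma InCentroid.eq_zero_of_sq_zero {f : Module.End K L} (hf : InCentroid f)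
    (h2 : f ^ 2 = 0) : f = 0 := by
  let I : LieIdeal K L :=
    { LinearMap.range f with
      lie_mem := by
        rintro x m ⟨y, rfl⟩
        exact ⟨⁅x, y⁆, (hf x y)⟩ }
  have key : ∀ y z : L, ⁅f y, z⁆ = f ⁅y, z⁆ := fun y z => by
    rw [← lie_skew, ← hf z y, ← map_neg, lie_skew]
  have habelian : IsLieAbelian I := by
    constructor
    rintro ⟨a, y, rfl⟩ ⟨b, z, rfl⟩
    have : ⁅f y, f z⁆ = (0 : L) := by
      calc ⁅f y, f z⁆ = f ⁅f y, z⁆ := (hf (f y) z).symm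
        _ = f (f ⁅y, z⁆) := by rw [key]
        _ = (f ^ 2) ⁅y, z⁆ := rfl
        _ = 0 := by rw [h2]; rfl
    exact Subtype.ext this
  have hbot : I = ⊥ :=
    (LieAlgebra.hasTrivialRadical_iff_no_abelian_ideals K L).mp ‹_› I habelian
  ext x
  have : f x ∈ I := ⟨x, rfl⟩
  rw [hbot] at this
  simpa using this

lemma InCentroid.eq_zero_of_nilpotent {f : Module.End K L} (hf : InCentroid f)
    (hn : IsNilpotent f) : f = 0 := by
  obtain ⟨n, hn⟩ := hn
  induction n with
  | zero =>
    have h1 : (1 : Module.End K L) = 0 := by simpa using hn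
    calc f = f * 1 := (mul_one f).symm
      _ = 0 := by rw [h1, mul_zero]
  | succ n ih =>
    rcases Nat.eq_zero_or_pos n with rfl | hpos
    · simpa using hn
    · have h2 : (f ^ n) ^ 2 = 0 := by
        rw [← pow_mul]
        have : n * 2 = (n + 1) + (n - 1) := by omega
        rw [this, pow_add, hn, zero_mul]
      have := (hf.pow n).eq_zero_of_sq_zero h2
      exact ih this

end Aux

/-- If `L` is a finite-dimensional semisimple Lie algebra over a field of characteristic zero,
then every nilpotent element of the centroid is zero, and consequently every element of the
centroid is a semisimple endomorphism. -/
theorem stmt_2 {K L : Type*} [Field K] [CharZero K] [LieRing L] [LieAlgebra K L]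
    [FiniteDimensional K L] [LieAlgebra.IsSemisimple K L] :
    (∀ f : Module.End K L, InCentroid f → IsNilpotent f → f = 0) ∧
    (∀ f : Module.End K L, InCentroid f → f.IsSemisimple) := by
  refine ⟨fun f hf hn => hf.eq_zero_of_nilpotent hn, fun f hf => ?_⟩
  obtain ⟨n, hnmem, s, hsmem, hnil, hsemi, hfs⟩ :=
    Module.End.exists_isNilpotent_isSemisimple (f := f)
  have hn0 : n = 0 := (hf.of_mem_adjoin hnmem).eq_zero_of_nilpotent hnil
  rw [hfs, hn0, zero_add]
  exact hsemi
end

section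
/- Let 𝕂 be ℝ or ℂ and let 𝔤 be a finite-dimensional Lie algebra over 𝕂 with z(𝔤) ⊆ ⁅𝔤,𝔤⁆. Suppose 𝔤 = 𝔤₁ ⊕ … ⊕ 𝔤ₙ is an internal direct sum of nonzero ideals, each indecomposable as a Lie algebra, such that for all i ≠ j either 𝔤ᵢ is perfect or 𝔤ⱼ is centerfree (equivalently, every linear map 𝔤ᵢ/⁅𝔤ᵢ,𝔤ᵢ⁆ → z(𝔤ⱼ) is zero). Then this decomposition is unique except for the order: if 𝔥₁, …, 𝔥ₘ is any family of nonzero ideals, each indecomposable as a Lie algebra, with 𝔤 = 𝔥₁ ⊕ … ⊕ 𝔥ₘ an internal direct sum, then m = n and {𝔤₁, …, 𝔤ₙ} = {𝔥₁, …, 𝔥ₘ} as sets of ideals. -/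
set_option maxHeartbeats 1000000

/-- A Lie algebra is indecomposable if it is not the direct sum of two nonzero ideals. -/
def IsIndecomposableLie (K L : Type*) [CommRing K] [LieRing L] [LieAlgebra K L] : Prop :=
  ∀ I J : LieIdeal K L, I ⊓ J = ⊥ → I ⊔ J = ⊤ → I = ⊥ ∨ J = ⊥



section AuxAll
variable {𝕜 L : Type*} [Field 𝕜] [LieRing L] [LieAlgebra 𝕜 L]



theorem exists_lie_projections {r : ℕ} (N : Fin r → LieIdeal 𝕜 L)
    (hint : DirectSum.IsInternal (fun i => (N i : Submodule 𝕜 L))) :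
    ∃ π : Fin r → (L →ₗ[𝕜] L),
      (∀ i x, π i x ∈ N i) ∧
      (∀ i x, x ∈ N i → π i x = x) ∧
      (∀ i j x, j ≠ i → x ∈ N j → π i x = 0) ∧
      (∀ x, ∑ i, π i x = x) ∧
      (∀ i (x y : L), π i ⁅x, y⁆ = ⁅x, π i y⁆) := by
  have hind := hint.submodule_iSupIndep
  have htop := hint.submodule_iSup_eq_top
  have hcompl : ∀ i, IsCompl (N i : Submodule 𝕜 L) (⨆ j ∈ {j | j ≠ i}, (N j : Submodule 𝕜 L)) := by
    intro i
    constructor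
    · exact hind.disjoint_biSup (by simp)
    · rw [codisjoint_iff, eq_top_iff, ← htop]
      refine iSup_le fun j => ?_
      rcases eq_or_ne j i with rfl | hj
      · exact le_sup_left
      · exact le_trans (le_biSup (fun j => (N j : Submodule 𝕜 L)) hj) le_sup_right
  set π : Fin r → (L →ₗ[𝕜] L) := fun i =>
    ((N i : Submodule 𝕜 L).subtype).comp
      (Submodule.projectionOnto _ _ (hcompl i)) with hπ
  have hmem : ∀ i x, π i x ∈ N i := fun i x =>
    ((Submodule.projectionOnto _ _ (hcompl i)) x).2
  have hleft : ∀ i x, x ∈ N i → π i x = x := by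
    intro i x hx
    have := Submodule.projectionOnto_apply_left (hcompl i) ⟨x, hx⟩
    have := congrArg (Subtype.val) this
    exact this
  have hright : ∀ i j x, j ≠ i → x ∈ N j → π i x = 0 := by
    intro i j x hj hx
    have hx' : x ∈ ⨆ j ∈ {j | j ≠ i}, (N j : Submodule 𝕜 L) :=
      (le_biSup (fun j => (N j : Submodule 𝕜 L)) hj) hx
    have := Submodule.projectionOnto_apply_of_mem_right (hcompl i) hx'
    have := congrArg (Subtype.val) this
    exact this
  refine ⟨π, hmem, hleft, hright, ?_, ?_⟩
  · intro x
    have hx : x ∈ ⨆ j, (N j : Submodule 𝕜 L) := htop ▸ Submodule.mem_top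
    refine Submodule.iSup_induction (motive := fun z => ∑ i, π i z = z) _ hx
      (fun j y hy => ?_) (by show ∑ i, π i 0 = 0; simp) (fun y z hy hz => ?_)
    · show ∑ i, π i y = y
      rw [Finset.sum_eq_single j (fun b _ hbj => hright b j y hbj.symm hy) (by simp)]
      exact hleft j y hy
    · show ∑ i, π i (y + z) = y + z
      simp only [map_add]
      rw [Finset.sum_add_distrib, hy, hz]
  · intro i x y
    have hy : y ∈ ⨆ j, (N j : Submodule 𝕜 L) := htop ▸ Submodule.mem_top
    refine Submodule.iSup_induction (motive := fun z => π i ⁅x, z⁆ = ⁅x, π i z⁆) _ hy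
      (fun j z hz => ?_) (by show π i ⁅x, (0:L)⁆ = ⁅x, π i 0⁆; simp) (fun z w hz hw => ?_)
    · show π i ⁅x, z⁆ = ⁅x, π i z⁆
      rcases eq_or_ne j i with rfl | hj
      · rw [hleft j z hz, hleft j _ ((N j).lie_mem hz)]
      · rw [hright i j z hj hz, hright i j _ hj ((N j).lie_mem hz), lie_zero]
    · show π i ⁅x, z + w⁆ = ⁅x, π i (z + w)⁆
      simp only [lie_add, map_add, hz, hw]




/-- Endomorphisms of a Lie ideal commuting with the adjoint action of the ambient algebra. -/
def commEnd (𝕜 : Type*) {L : Type*} [Field 𝕜] [LieRing L] [LieAlgebra 𝕜 L] (J : LieIdeal 𝕜 L) :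
    Subalgebra 𝕜 (Module.End 𝕜 J) where
  carrier := {f | ∀ (x : L) (m : J), f ⁅x, m⁆ = ⁅x, f m⁆}
  mul_mem' := fun {f g} hf hg x m => by
    simp only [Module.End.mul_apply, hg x m, hf x (g m)]
  one_mem' := fun x m => rfl
  add_mem' := fun {f g} hf hg x m => by
    simp only [LinearMap.add_apply, hf x m, hg x m, lie_add]
  zero_mem' := fun x m => by simp
  algebraMap_mem' := fun c x m => by
    simp [Module.algebraMap_end_apply, lie_smul]

theorem lieIdeal_of_stable (J : LieIdeal 𝕜 L) (W : Submodule 𝕜 J)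
    (hW : ∀ (x : L) (m : J), m ∈ W → ⁅x, m⁆ ∈ W) :
    ∃ A : LieIdeal 𝕜 J, A.toSubmodule = W := by
  refine ⟨{ toSubmodule := W, lie_mem := fun {a m} hm => ?_ }, rfl⟩
  have h : ⁅a, m⁆ = ⁅(↑a : L), m⁆ := Subtype.ext rfl
  rw [h]; exact hW ↑a m hm

theorem bij_or_nilp [FiniteDimensional 𝕜 L] (J : LieIdeal 𝕜 L)
    (hind : IsIndecomposableLie 𝕜 J) {f : Module.End 𝕜 J} (hf : f ∈ commEnd 𝕜 J) :
    Function.Bijective f ∨ IsNilpotent f := by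
  haveI : FiniteDimensional 𝕜 J := inferInstanceAs (FiniteDimensional 𝕜 (J : Submodule 𝕜 L))
  obtain ⟨k, hk1, hk⟩ : ∃ k, 1 ≤ k ∧
      IsCompl (LinearMap.ker (f ^ k)) (LinearMap.range (f ^ k)) :=
    ((Filter.eventually_ge_atTop 1).and f.eventually_isCompl_ker_pow_range_pow).exists
  have hfk : (f ^ k) ∈ commEnd 𝕜 J := pow_mem hf k
  obtain ⟨A, hA⟩ := lieIdeal_of_stable J (LinearMap.ker (f ^ k)) (fun x m hm => by
    have : (f ^ k) ⁅x, m⁆ = ⁅x, (f ^ k) m⁆ := hfk x m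
    simp only [LinearMap.mem_ker] at hm ⊢
    rw [this, hm, lie_zero])
  obtain ⟨B, hB⟩ := lieIdeal_of_stable J (LinearMap.range (f ^ k)) (fun x m hm => by
    obtain ⟨y, rfl⟩ := hm
    exact ⟨⁅x, y⁆, hfk x y⟩)
  have h1 : A ⊓ B = ⊥ := by
    rw [← LieSubmodule.toSubmodule_inj, LieSubmodule.inf_toSubmodule, hA, hB,
      LieSubmodule.bot_toSubmodule, ← disjoint_iff]
    exact hk.disjoint
  have h2 : A ⊔ B = ⊤ := by
    rw [← LieSubmodule.toSubmodule_inj, LieSubmodule.sup_toSubmodule, hA, hB,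
      LieSubmodule.top_toSubmodule, ← codisjoint_iff]
    exact hk.codisjoint
  rcases hind A B h1 h2 with h | h
  · left
    have hker : LinearMap.ker (f ^ k) = ⊥ := by
      rw [← hA, h, LieSubmodule.bot_toSubmodule]
    have hinj : Function.Injective f := by
      rw [← LinearMap.ker_eq_bot, ← le_bot_iff, ← hker]
      intro x hx
      simp only [LinearMap.mem_ker] at hx ⊢
      obtain ⟨k', rfl⟩ : ∃ k', k = k' + 1 := ⟨k - 1, (Nat.succ_pred_eq_of_pos hk1).symm⟩
      rw [pow_succ, Module.End.mul_apply, hx, map_zero]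
    exact ⟨hinj, (LinearMap.injective_iff_surjective).mp hinj⟩
  · right
    refine ⟨k, ?_⟩
    have hrange : LinearMap.range (f ^ k) = ⊥ := by
      rw [← hB, h, LieSubmodule.bot_toSubmodule]
    exact LinearMap.range_eq_bot.mp hrange

theorem exists_bijective_of_sum_eq_one [FiniteDimensional 𝕜 L] (J : LieIdeal 𝕜 L)
    (hne : J ≠ ⊥) (hind : IsIndecomposableLie 𝕜 J) :
    ∀ {r : ℕ} (g : Fin r → Module.End 𝕜 J), (∀ i, g i ∈ commEnd 𝕜 J) →
      (∑ i, g i) = 1 → ∃ i, Function.Bijective (g i) := by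
  intro r
  induction r with
  | zero =>
    intro g hg hsum
    exfalso
    rw [Finset.univ_eq_empty, Finset.sum_empty] at hsum
    have hnt : Nontrivial J := by
      rw [LieSubmodule.nontrivial_iff_ne_bot]; exact hne
    obtain ⟨y, hy⟩ := exists_ne (0 : J)
    exact hy (by simpa using (LinearMap.ext_iff.mp hsum y).symm)
  | succ r ih =>
    intro g hg hsum
    rcases bij_or_nilp J hind (hg (Fin.last r)) with hb | hn
    · exact ⟨Fin.last r, hb⟩
    obtain ⟨k, hk⟩ := hn
    set f := g (Fin.last r) with hfdef
    have hsum' : ∑ i : Fin r, g i.castSucc = 1 - f := by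
      rw [Fin.sum_univ_castSucc] at hsum
      exact eq_sub_of_add_eq hsum
    set u : Module.End 𝕜 J := ∑ j ∈ Finset.range k, f ^ j with hudef
    have hu1 : u * (1 - f) = 1 := by
      have h3 := geom_sum_mul f k
      have h2 : u * (1 - f) = -(u * (f - 1)) := by noncomm_ring
      rw [h2, h3, hk]; simp
    have h1u : (1 - f) * u = 1 := by
      have h3 := mul_geom_sum f k
      have h2 : (1 - f) * u = -((f - 1) * u) := by noncomm_ring
      rw [h2, h3, hk]; simp
    have huc : u ∈ commEnd 𝕜 J := by
      exact Subalgebra.sum_mem _ (fun j _ => pow_mem (hg _) j)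
    set g' : Fin r → Module.End 𝕜 J := fun i => u * g i.castSucc with hg'def
    have hg' : ∀ i, g' i ∈ commEnd 𝕜 J := fun i => mul_mem huc (hg _)
    have hsum'' : ∑ i, g' i = 1 := by
      rw [hg'def]
      rw [← Finset.mul_sum, hsum', hu1]
    obtain ⟨i, hbij⟩ := ih g' hg' hsum''
    have heq : (1 - f) * g' i = g i.castSucc := by
      rw [hg'def, ← mul_assoc, h1u, one_mul]
    have hbij1f : Function.Bijective (1 - f : Module.End 𝕜 J) := by
      constructor
      · intro x y hxy
        have h4 : (u * (1 - f)) x = (u * (1 - f)) y := by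
          simp only [Module.End.mul_apply]; rw [hxy]
        rw [hu1] at h4
        simpa using h4
      · intro x
        refine ⟨u x, ?_⟩
        have h4 := LinearMap.ext_iff.mp h1u x
        simpa [Module.End.mul_apply] using h4
    refine ⟨i.castSucc, ?_⟩
    rw [← heq]
    exact hbij1f.comp hbij




theorem lieIdeal_coe_inj {A B : LieIdeal 𝕜 L} (h : (A : Submodule 𝕜 L) = (B : Submodule 𝕜 L)) :
    A = B := by
  rw [LieIdeal.toLieSubalgebra_toSubmodule, LieIdeal.toLieSubalgebra_toSubmodule] at h
  exact (LieSubmodule.toSubmodule_inj _ _).mp h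

theorem lieIdeal_coe_bot {A : LieIdeal 𝕜 L} (h : (A : Submodule 𝕜 L) = ⊥) : A = ⊥ := by
  apply lieIdeal_coe_inj
  rw [h, LieIdeal.toLieSubalgebra_toSubmodule, LieSubmodule.bot_toSubmodule]

section Key
variable [FiniteDimensional 𝕜 L]

theorem key_exchange {n : ℕ} (I : Fin n → LieIdeal 𝕜 L)
    (hIne : ∀ i, I i ≠ ⊥) (hIind : ∀ i, IsIndecomposableLie 𝕜 (I i))
    (hIint : DirectSum.IsInternal (fun i => (I i : Submodule 𝕜 L)))
    (hpc : ∀ i j, i ≠ j →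
      (⁅(⊤ : LieIdeal 𝕜 (I i)), (⊤ : LieIdeal 𝕜 (I i))⁆ = (⊤ : LieIdeal 𝕜 (I i))) ∨
      LieAlgebra.center 𝕜 (I j) = ⊥)
    (J : LieIdeal 𝕜 L) (hJne : J ≠ ⊥) (hJind : IsIndecomposableLie 𝕜 J)
    (ρ : L →ₗ[𝕜] L) (hρmem : ∀ x, ρ x ∈ J) (hρid : ∀ x, x ∈ J → ρ x = x)
    (hρlie : ∀ (x y : L), ρ ⁅x, y⁆ = ⁅x, ρ y⁆) :
    ∃ i, J = I i := by
  classical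
  obtain ⟨π, hmem, hleft, hright, hsum, hlie⟩ := exists_lie_projections I hIint
  have hlie' : ∀ i (x y : L), π i ⁅x, y⁆ = ⁅π i x, y⁆ := by
    intro i x y
    calc π i ⁅x, y⁆ = π i (-⁅y, x⁆) := by rw [lie_skew]
      _ = -π i ⁅y, x⁆ := map_neg _ _
      _ = -⁅y, π i x⁆ := by rw [hlie i y x]
      _ = ⁅π i x, y⁆ := lie_skew _ _
  have hcomp : ∀ i (x y : L), π i ⁅x, y⁆ = ⁅π i x, π i y⁆ := by
    intro i x y
    rw [hlie' i x y]
    have h2 : ⁅π i x, y⁆ ∈ I i := by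
      rw [← lie_skew (π i x) y]
      exact neg_mem ((I i).lie_mem (hmem i x))
    rw [← hleft i _ h2, hlie i _ y]
  haveI : FiniteDimensional 𝕜 J := inferInstanceAs (FiniteDimensional 𝕜 (J : Submodule 𝕜 L))
  -- the endomorphisms of J
  set g : Fin n → Module.End 𝕜 J := fun i =>
    LinearMap.codRestrict (J : Submodule 𝕜 L) ((ρ ∘ₗ π i) ∘ₗ (J : Submodule 𝕜 L).subtype)
      (fun m => hρmem _) with hgdef
  have hgapp : ∀ i (m : J), ((g i m : J) : L) = ρ (π i (m : L)) := fun i m => rfl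
  have hgc : ∀ i, g i ∈ commEnd 𝕜 J := by
    intro i x m
    apply Subtype.ext
    rw [hgapp, LieSubmodule.coe_bracket, LieSubmodule.coe_bracket, hgapp, hlie i, hρlie]
  have hgsum : (∑ i, g i) = 1 := by
    apply LinearMap.ext
    intro m
    apply Subtype.ext
    rw [LinearMap.sum_apply]
    have hcoe : ((∑ i, g i m : J) : L) = ∑ i, ((g i m : J) : L) := by
      exact Submodule.coe_sum _ _ _
    rw [hcoe]
    simp only [hgapp]
    rw [← map_sum, hsum (m : L), hρid _ m.2]
    rfl
  obtain ⟨i, hbij⟩ := exists_bijective_of_sum_eq_one J hJne hJind g hgc hgsum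
  -- the maps a : J → I i and b : I i → J
  set a : J →ₗ[𝕜] (I i : LieIdeal 𝕜 L) :=
    LinearMap.codRestrict ((I i : Submodule 𝕜 L)) ((π i) ∘ₗ (J : Submodule 𝕜 L).subtype)
      (fun m => hmem i _) with hadef
  set b : (I i : LieIdeal 𝕜 L) →ₗ[𝕜] J :=
    LinearMap.codRestrict ((J : Submodule 𝕜 L)) (ρ ∘ₗ (I i : Submodule 𝕜 L).subtype)
      (fun m => hρmem _) with hbdef
  have haapp : ∀ (m : J), ((a m : (I i : LieIdeal 𝕜 L)) : L) = π i (m : L) := fun m => rfl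
  have hbapp : ∀ (z : (I i : LieIdeal 𝕜 L)), ((b z : J) : L) = ρ (z : L) := fun z => rfl
  have hba : ∀ m, b (a m) = g i m := fun m => Subtype.ext rfl
  have hainj : Function.Injective a := by
    intro m m' h
    apply hbij.1
    rw [← hba, ← hba, h]
  set u := (LinearEquiv.ofBijective (g i) hbij).symm with hudef
  have hug : ∀ m, u (g i m) = m := fun m =>
    (LinearEquiv.ofBijective (g i) hbij).symm_apply_apply m
  have hgu : ∀ m, g i (u m) = m := fun m =>
    (LinearEquiv.ofBijective (g i) hbij).apply_symm_apply m
  set e : Module.End 𝕜 (I i : LieIdeal 𝕜 L) := (a ∘ₗ (u : J →ₗ[𝕜] J)) ∘ₗ b with hedef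
  have heapp : ∀ z, e z = a (u (b z)) := fun z => rfl
  have hu_comm : ∀ (x : L) (m : J), u ⁅x, m⁆ = ⁅x, u m⁆ := by
    intro x m
    apply hbij.1
    rw [hgu, hgc i x (u m), hgu]
  have ha_comm : ∀ (x : L) (m : J), a ⁅x, m⁆ = ⁅x, a m⁆ := by
    intro x m
    apply Subtype.ext
    rw [haapp, LieSubmodule.coe_bracket, LieSubmodule.coe_bracket, haapp, hlie i]
  have hb_comm : ∀ (x : L) (z : (I i : LieIdeal 𝕜 L)), b ⁅x, z⁆ = ⁅x, b z⁆ := by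
    intro x z
    apply Subtype.ext
    rw [hbapp, LieSubmodule.coe_bracket, LieSubmodule.coe_bracket, hbapp, hρlie]
  have he_comm : ∀ (x : L) (z : (I i : LieIdeal 𝕜 L)), e ⁅x, z⁆ = ⁅x, e z⁆ := by
    intro x z
    rw [heapp, heapp, hb_comm, hu_comm, ha_comm]
  have hee : ∀ z, e (e z) = e z := by
    intro z
    rw [heapp, heapp, hba, hug]
  obtain ⟨A, hA⟩ := lieIdeal_of_stable (I i) (LinearMap.ker e) (fun x z hz => by
    rw [LinearMap.mem_ker] at hz ⊢
    rw [he_comm, hz, lie_zero])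
  obtain ⟨B, hB⟩ := lieIdeal_of_stable (I i) (LinearMap.range e) (fun x z hz => by
    obtain ⟨y, rfl⟩ := hz
    exact ⟨⁅x, y⁆, he_comm x y⟩)
  have h1 : A ⊓ B = ⊥ := by
    rw [← LieSubmodule.toSubmodule_inj, LieSubmodule.inf_toSubmodule, hA, hB,
      LieSubmodule.bot_toSubmodule, eq_bot_iff]
    intro z hz
    rw [Submodule.mem_inf] at hz
    obtain ⟨hzk, y, hy⟩ := hz
    rw [Submodule.mem_bot]
    calc z = e y := hy.symm
      _ = e (e y) := (hee y).symm
      _ = e z := by rw [hy]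
      _ = 0 := hzk
  have h2 : A ⊔ B = ⊤ := by
    rw [← LieSubmodule.toSubmodule_inj, LieSubmodule.sup_toSubmodule, hA, hB,
      LieSubmodule.top_toSubmodule, eq_top_iff]
    intro z _
    refine Submodule.mem_sup.mpr ⟨z - e z, ?_, e z, ⟨z, rfl⟩, by abel⟩
    rw [LinearMap.mem_ker, map_sub, hee, sub_self]
  haveI : Nontrivial J := (LieSubmodule.nontrivial_iff_ne_bot 𝕜 L L).mpr hJne
  have hasurj : Function.Surjective a := by
    rcases hIind i A B h1 h2 with hbot | hbot
    · have hker : LinearMap.ker e = ⊥ := by rw [← hA, hbot, LieSubmodule.bot_toSubmodule]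
      have heinj : Function.Injective e := LinearMap.ker_eq_bot.mp hker
      have hid : ∀ z, e z = z := fun z => heinj (hee z)
      exact fun z => ⟨u (b z), by rw [← heapp, hid]⟩
    · exfalso
      have hrange : LinearMap.range e = ⊥ := by rw [← hB, hbot, LieSubmodule.bot_toSubmodule]
      have he0 : e = 0 := LinearMap.range_eq_bot.mp hrange
      obtain ⟨y, hy⟩ := exists_ne (0 : J)
      apply hy
      apply hbij.1
      have h5 : e (a y) = a y := by rw [heapp, hba, hug]
      have h6 : a y = 0 := by rw [← h5, he0, LinearMap.zero_apply]
      rw [← hba, h6, map_zero, map_zero]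
  have hJI0 : ∀ (x : L), x ∈ J → ∀ j, j ≠ i → x ∈ I j → x = 0 := by
    intro x hx j hj hxj
    have h5 : a ⟨x, hx⟩ = 0 := Subtype.ext (by rw [haapp]; exact hright i j x hj hxj)
    have h6 : (⟨x, hx⟩ : J) = 0 := hainj (h5.trans (map_zero a).symm)
    exact congrArg Subtype.val h6
  have hcentral : ∀ j, j ≠ i → ∀ (x : L), x ∈ J → ∀ (z : L), z ∈ I j → ⁅π j x, z⁆ = 0 := by
    intro j hj x hx z hz
    have h5 : ⁅x, z⁆ ∈ J := by
      rw [← lie_skew x z]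
      exact neg_mem (J.lie_mem hx)
    have h6 : ⁅x, z⁆ ∈ I j := (I j).lie_mem hz
    have h7 : ⁅x, z⁆ = 0 := hJI0 _ h5 j hj h6
    rw [← hlie' j x z, h7, map_zero]
  have hbrk : ∀ (x y : L), x ∈ J → y ∈ J → ⁅x, y⁆ = ⁅π i x, π i y⁆ := by
    intro x y hx hy
    conv_lhs => rw [← hsum ⁅x, y⁆]
    rw [Finset.sum_eq_single i (fun j _ hji => by
        rw [hcomp j x y]; exact hcentral j hji x hx (π j y) (hmem j y)) (by simp)]
    exact hcomp i x y
  have hfr : Module.finrank 𝕜 J = Module.finrank 𝕜 (I i : LieIdeal 𝕜 L) :=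
    (LinearEquiv.ofBijective a ⟨hainj, hasurj⟩).finrank_eq
  by_cases hcent : ∀ j, j ≠ i → LieAlgebra.center 𝕜 (I j) = ⊥
  · have hle : (J : Submodule 𝕜 L) ≤ (I i : Submodule 𝕜 L) := by
      intro x hx
      have hx' : x ∈ J := hx
      have hzero : ∀ j, j ≠ i → π j x = 0 := by
        intro j hj
        have hmemc : (⟨π j x, hmem j x⟩ : (I j : LieIdeal 𝕜 L)) ∈ LieAlgebra.center 𝕜 (I j) := by
          refine (LieModule.mem_maxTrivSubmodule 𝕜 _ _ _).mpr (fun y => ?_)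
          apply Subtype.ext
          show ⁅(y : L), π j x⁆ = 0
          rw [← lie_skew (y : L) (π j x), hcentral j hj x hx' (y : L) y.2, neg_zero]
        rw [hcent j hj] at hmemc
        exact congrArg Subtype.val ((LieSubmodule.mem_bot _).mp hmemc)
      have hx2 : x = π i x := by
        conv_lhs => rw [← hsum x]
        rw [Finset.sum_eq_single i (fun j _ hji => hzero j hji) (by simp)]
      rw [hx2]; exact hmem i x
    have heq := Submodule.eq_of_le_of_finrank_eq hle hfr
    exact ⟨i, lieIdeal_coe_inj heq⟩
  · push_neg at hcent
    obtain ⟨j₀, hj₀, hcne⟩ := hcent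
    have hperf := (hpc i j₀ (Ne.symm hj₀)).resolve_right hcne
    have hle : (I i : Submodule 𝕜 L) ≤ (J : Submodule 𝕜 L) := by
      intro z hz
      have hz1 : (⟨z, hz⟩ : (I i : LieIdeal 𝕜 L)) ∈ (⊤ : LieIdeal 𝕜 (I i)) := trivial
      rw [← hperf] at hz1
      have hz2 : (⟨z, hz⟩ : (I i : LieIdeal 𝕜 L)) ∈
          LieSubmodule.toSubmodule (⁅(⊤ : LieIdeal 𝕜 (I i)), (⊤ : LieIdeal 𝕜 (I i))⁆) := hz1
      rw [LieSubmodule.lieIdeal_oper_eq_linear_span'] at hz2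
      have key : ∀ (w : (I i : LieIdeal 𝕜 L)),
          w ∈ Submodule.span 𝕜 {m : (I i : LieIdeal 𝕜 L) |
            ∃ x ∈ (⊤ : LieIdeal 𝕜 (I i)), ∃ n ∈ (⊤ : LieIdeal 𝕜 (I i)), ⁅x, n⁆ = m} →
          (w : L) ∈ J := by
        intro w hw
        refine Submodule.span_induction ?_ ?_ ?_ ?_ hw
        · rintro m ⟨x, -, y, -, rfl⟩
          obtain ⟨p, hp⟩ := hasurj x
          obtain ⟨q, hq⟩ := hasurj y
          have hpc' : π i (p : L) = (x : L) := congrArg Subtype.val hp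
          have hqc' : π i (q : L) = (y : L) := congrArg Subtype.val hq
          show ⁅(x : L), (y : L)⁆ ∈ J
          rw [← hpc', ← hqc', ← hbrk (p : L) (q : L) p.2 q.2]
          exact J.lie_mem q.2
        · exact J.zero_mem'
        · intro m₁ m₂ _ _ h₁ h₂
          exact J.add_mem' h₁ h₂
        · intro t m _ h
          exact J.smul_mem' t h
      exact key _ hz2
    have heq := Submodule.eq_of_le_of_finrank_eq hle hfr.symm
    exact ⟨i, (lieIdeal_coe_inj heq).symm⟩

end Key

end AuxAll


/-- Let `𝕜` be `ℝ` or `ℂ` and `L` a finite-dimensional Lie algebra over `𝕜` whose center is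
contained in its derived ideal.  A decomposition of `L` as an internal direct sum of nonzero
indecomposable ideals such that for `i ≠ j` the ideal `𝔤ᵢ` is perfect or `𝔤ⱼ` is centerfree
is unique except for the order. -/
theorem stmt_4 {𝕜 L : Type*} [RCLike 𝕜] [LieRing L] [LieAlgebra 𝕜 L] [FiniteDimensional 𝕜 L]
    (hz : LieAlgebra.center 𝕜 L ≤ ⁅(⊤ : LieIdeal 𝕜 L), (⊤ : LieIdeal 𝕜 L)⁆)
    (n : ℕ) (I : Fin n → LieIdeal 𝕜 L)
    (hIne : ∀ i, I i ≠ ⊥)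
    (hIind : ∀ i, IsIndecomposableLie 𝕜 (I i))
    (hIint : DirectSum.IsInternal (fun i => (I i : Submodule 𝕜 L)))
    (hpc : ∀ i j, i ≠ j →
      (⁅(⊤ : LieIdeal 𝕜 (I i)), (⊤ : LieIdeal 𝕜 (I i))⁆ = (⊤ : LieIdeal 𝕜 (I i))) ∨
      LieAlgebra.center 𝕜 (I j) = ⊥)
    (m : ℕ) (J : Fin m → LieIdeal 𝕜 L)
    (hJne : ∀ j, J j ≠ ⊥)
    (hJind : ∀ j, IsIndecomposableLie 𝕜 (J j))
    (hJint : DirectSum.IsInternal (fun j => (J j : Submodule 𝕜 L))) :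
    m = n ∧ Set.range J = Set.range I := by

  classical
  obtain ⟨ρ, hρmem, hρleft, hρright, hρsum, hρlie⟩ := exists_lie_projections J hJint
  have hchoice : ∀ k, ∃ i, J k = I i := fun k =>
    key_exchange I hIne hIind hIint hpc (J k) (hJne k) (hJind k) (ρ k)
      (fun x => hρmem k x) (fun x hx => hρleft k x hx) (hρlie k)
  choose σ hσ using hchoice
  have hσinj : Function.Injective σ := by
    intro k l hkl
    by_contra hne
    have hd : Disjoint ((J k) : Submodule 𝕜 L) ((J l) : Submodule 𝕜 L) :=
      hJint.submodule_iSupIndep.pairwiseDisjoint hne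
    have hJkl : J k = J l := (hσ k).trans (by rw [hkl, ← hσ l])
    rw [← hJkl] at hd
    exact hJne k (lieIdeal_coe_bot (hd.eq_bot_of_le le_rfl))
  have hσsurj : Function.Surjective σ := by
    intro i₀
    by_contra hi₀
    push_neg at hi₀
    have hd : Disjoint ((I i₀) : Submodule 𝕜 L) (⨆ j ∈ {j | j ≠ i₀}, ((I j) : Submodule 𝕜 L)) :=
      hIint.submodule_iSupIndep.disjoint_biSup (by simp)
    have hle : ((I i₀) : Submodule 𝕜 L) ≤ ⨆ j ∈ {j | j ≠ i₀}, ((I j) : Submodule 𝕜 L) := by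
      calc ((I i₀) : Submodule 𝕜 L) ≤ ⊤ := le_top
        _ = ⨆ k, ((J k) : Submodule 𝕜 L) := hJint.submodule_iSup_eq_top.symm
        _ ≤ _ := iSup_le fun k => by
            rw [hσ k]
            exact le_biSup (fun j => ((I j) : Submodule 𝕜 L)) (hi₀ k)
    exact hIne i₀ (lieIdeal_coe_bot (hd.eq_bot_of_le hle))
  have hbij : Function.Bijective σ := ⟨hσinj, hσsurj⟩
  constructor
  · have := Fintype.card_of_bijective hbij
    simpa using this
  · ext A
    constructor
    · rintro ⟨k, rfl⟩
      exact ⟨σ k, (hσ k).symm⟩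
    · rintro ⟨i, rfl⟩
      obtain ⟨k, rfl⟩ := hσsurj i
      exact ⟨k, hσ k⟩
end

section
/- Let 𝔨 be a finite-dimensional simple complex Lie algebra and A a finite-dimensional commutative associative unital ℂ-algebra. Equip the base change 𝔤 := A ⊗_ℂ 𝔨 with the Lie bracket determined by ⁅a⊗x, b⊗y⁆ = (ab) ⊗ ⁅x,y⁆. Then 𝔤 is perfect and centerfree, and the map sending a ∈ A to the endomorphism b⊗x ↦ (ab)⊗x of 𝔤 is an isomorphism of associative ℂ-algebras from A onto the centroid Cent(𝔤). -/
open scoped TensorProduct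

namespace Stmt7Aux

variable {𝔨 A : Type*} [LieRing 𝔨] [LieAlgebra ℂ 𝔨] [FiniteDimensional ℂ 𝔨]
    [LieAlgebra.IsSimple ℂ 𝔨] [CommRing A] [Algebra ℂ A] [FiniteDimensional ℂ A]

lemma nontrivial_k : Nontrivial 𝔨 := by
  by_contra h
  rw [not_nontrivial_iff_subsingleton] at h
  exact LieAlgebra.IsSimple.non_abelian (R := ℂ) (L := 𝔨)
    ⟨fun x y => Subsingleton.elim _ _⟩

lemma exists_nonzero_bracket : ∃ x y : 𝔨, ⁅x, y⁆ ≠ 0 := by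
  by_contra h
  push_neg at h
  exact LieAlgebra.IsSimple.non_abelian (R := ℂ) (L := 𝔨) ⟨fun x y => h x y⟩

/-- Schur's lemma for the adjoint module of a simple complex Lie algebra. -/
lemma schur (h : Module.End ℂ 𝔨) (hh : ∀ y x : 𝔨, h ⁅y, x⁆ = ⁅y, h x⁆) :
    ∃ c : ℂ, ∀ x, h x = c • x := by
  have : Nontrivial 𝔨 := nontrivial_k
  obtain ⟨c, hc⟩ := Module.End.exists_eigenvalue h
  refine ⟨c, ?_⟩
  let I : LieIdeal ℂ 𝔨 :=
    { Module.End.eigenspace h c with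
      lie_mem := by
        intro y x hx
        have hx' : h x = c • x := Module.End.mem_eigenspace_iff.mp hx
        show ⁅y, x⁆ ∈ Module.End.eigenspace h c
        rw [Module.End.mem_eigenspace_iff, hh, hx', lie_smul] }
  have hIbot : I ≠ ⊥ := by
    intro hbot
    apply hc
    rw [Module.End.HasEigenvalue] at hc
    have : (I : Submodule ℂ 𝔨) = ⊥ := by rw [hbot]; rfl
    exact this
  have hItop : I = ⊤ := (LieAlgebra.IsSimple.eq_bot_or_eq_top I).resolve_left hIbot
  intro x
  have hx : x ∈ I := hItop ▸ trivial
  exact Module.End.mem_eigenspace_iff.mp hx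

variable {ι : Type*}

/-- Coordinate projection `A ⊗ 𝔨 → 𝔨` along a basis vector of `A`. -/
noncomputable def P (bA : Module.Basis ι ℂ A) (i : ι) : A ⊗[ℂ] 𝔨 →ₗ[ℂ] 𝔨 :=
  (TensorProduct.lid ℂ 𝔨).toLinearMap ∘ₗ LinearMap.rTensor 𝔨 (bA.coord i)

@[simp] lemma P_tmul (bA : Module.Basis ι ℂ A) (i : ι) (a : A) (x : 𝔨) :
    P bA i (a ⊗ₜ[ℂ] x) = bA.repr a i • x := by
  simp [P]

lemma sum_P [Fintype ι] (bA : Module.Basis ι ℂ A) (z : A ⊗[ℂ] 𝔨) :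
    ∑ i, bA i ⊗ₜ[ℂ] P bA i z = z := by
  induction z using TensorProduct.induction_on with
  | zero => simp
  | tmul a x =>
      calc ∑ i, bA i ⊗ₜ[ℂ] P bA i (a ⊗ₜ[ℂ] x)
          = ∑ i, (bA.repr a i • bA i) ⊗ₜ[ℂ] x := by
            simp [TensorProduct.smul_tmul]
        _ = (∑ i, bA.repr a i • bA i) ⊗ₜ[ℂ] x := by
            rw [TensorProduct.sum_tmul]
        _ = a ⊗ₜ[ℂ] x := by rw [bA.sum_repr a]
  | add u v hu hv =>
      simp only [map_add, TensorProduct.tmul_add, Finset.sum_add_distrib, hu, hv]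

lemma P_lie (bA : Module.Basis ι ℂ A) (i : ι) (y : 𝔨) (z : A ⊗[ℂ] 𝔨) :
    P bA i ⁅(1 : A) ⊗ₜ[ℂ] y, z⁆ = ⁅y, P bA i z⁆ := by
  induction z using TensorProduct.induction_on with
  | zero => simp
  | tmul a x =>
      rw [LieAlgebra.ExtendScalars.bracket_tmul, one_mul]
      simp [lie_smul]
  | add u v hu hv => simp only [lie_add, map_add, hu, hv]

/-- cancellation: `a ⊗ x = a' ⊗ x` with `x ≠ 0` implies `a = a'`. -/
lemma tmul_right_cancel {a a' : A} {x : 𝔨} (hx : x ≠ 0)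
    (h : a ⊗ₜ[ℂ] x = a' ⊗ₜ[ℂ] x) : a = a' := by
  have : Nontrivial 𝔨 := nontrivial_k
  let bK := Module.finBasis ℂ 𝔨
  obtain ⟨k, hk⟩ : ∃ k, bK.repr x k ≠ 0 := by
    by_contra hall
    push_neg at hall
    apply hx
    have := bK.sum_repr x
    simp only [hall, zero_smul, Finset.sum_const_zero] at this
    exact this.symm
  let Q : A ⊗[ℂ] 𝔨 →ₗ[ℂ] A :=
    (TensorProduct.rid ℂ A).toLinearMap ∘ₗ LinearMap.lTensor A (bK.coord k)
  have hQ : ∀ (b : A) (v : 𝔨), Q (b ⊗ₜ[ℂ] v) = bK.repr v k • b := by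
    intro b v; simp [Q]
  have h2 := congrArg Q h
  rw [hQ, hQ] at h2
  have := smul_right_injective A hk
  exact this h2

/-- The key "Schur" step: any centroid element acts on each `b ⊗ -` slice as a fixed
element of `A` tensored with the identity. -/
lemma slice (f : Module.End ℂ (A ⊗[ℂ] 𝔨))
    (hf : ∀ x y : A ⊗[ℂ] 𝔨, f ⁅x, y⁆ = ⁅x, f y⁆) (b : A) :
    ∃ a' : A, ∀ x : 𝔨, f (b ⊗ₜ[ℂ] x) = a' ⊗ₜ[ℂ] x := by
  let bA := Module.finBasis ℂ A
  have key : ∀ i, ∃ c : ℂ, ∀ x : 𝔨, P bA i (f (b ⊗ₜ[ℂ] x)) = c • x := by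
    intro i
    refine schur ((P bA i) ∘ₗ (f : A ⊗[ℂ] 𝔨 →ₗ[ℂ] A ⊗[ℂ] 𝔨) ∘ₗ
      ((TensorProduct.mk ℂ A 𝔨) b)) ?_
    intro y x
    simp only [LinearMap.coe_comp, Function.comp_apply, TensorProduct.mk_apply]
    have hbr : b ⊗ₜ[ℂ] ⁅y, x⁆ = ⁅(1 : A) ⊗ₜ[ℂ] y, b ⊗ₜ[ℂ] x⁆ := by
      rw [LieAlgebra.ExtendScalars.bracket_tmul, one_mul]
    rw [hbr, hf, P_lie]
  choose c hc using key
  refine ⟨∑ i, c i • bA i, fun x => ?_⟩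
  calc f (b ⊗ₜ[ℂ] x) = ∑ i, bA i ⊗ₜ[ℂ] P bA i (f (b ⊗ₜ[ℂ] x)) := (sum_P bA _).symm
    _ = ∑ i, (c i • bA i) ⊗ₜ[ℂ] x := by
        simp only [hc, TensorProduct.smul_tmul, TensorProduct.tmul_smul]
    _ = (∑ i, c i • bA i) ⊗ₜ[ℂ] x := by rw [TensorProduct.sum_tmul]

lemma centroid_mem (f : Module.End ℂ (A ⊗[ℂ] 𝔨))
    (hf : ∀ x y : A ⊗[ℂ] 𝔨, f ⁅x, y⁆ = ⁅x, f y⁆) :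
    ∃ a : A, ∀ (b : A) (x : 𝔨), f (b ⊗ₜ[ℂ] x) = (a * b) ⊗ₜ[ℂ] x := by
  choose g hg using slice f hf
  obtain ⟨x0, y0, hxy⟩ := exists_nonzero_bracket (𝔨 := 𝔨)
  refine ⟨g 1, fun b x => ?_⟩
  have key : g b = b * g 1 := by
    have h1 : f ⁅b ⊗ₜ[ℂ] x0, (1 : A) ⊗ₜ[ℂ] y0⁆ = g b ⊗ₜ[ℂ] ⁅x0, y0⁆ := by
      rw [LieAlgebra.ExtendScalars.bracket_tmul, mul_one, hg]
    have h2 : f ⁅b ⊗ₜ[ℂ] x0, (1 : A) ⊗ₜ[ℂ] y0⁆ = (b * g 1) ⊗ₜ[ℂ] ⁅x0, y0⁆ := by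
      rw [hf, hg, LieAlgebra.ExtendScalars.bracket_tmul]
    exact tmul_right_cancel hxy (h1.symm.trans h2)
  rw [hg, key, mul_comm]

/-- The algebra map `A → End (A ⊗ 𝔨)`. -/
noncomputable def Phi : A →ₐ[ℂ] Module.End ℂ (A ⊗[ℂ] 𝔨) where
  toFun a := LinearMap.rTensor 𝔨 (LinearMap.mulLeft ℂ a)
  map_one' := by
    apply TensorProduct.ext'; intro a x
    simp
  map_mul' a b := by
    apply TensorProduct.ext'; intro c x
    simp [Module.End.mul_apply, mul_assoc]
  map_zero' := by
    apply TensorProduct.ext'; intro a x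
    simp
  map_add' a b := by
    apply TensorProduct.ext'; intro c x
    simp [add_mul, TensorProduct.add_tmul]
  commutes' c := by
    apply TensorProduct.ext'; intro a x
    simp [Module.algebraMap_end_apply, TensorProduct.smul_tmul', Algebra.smul_def]

@[simp] lemma Phi_tmul (a b : A) (x : 𝔨) :
    (Phi (𝔨 := 𝔨) (A := A) a) (b ⊗ₜ[ℂ] x) = (a * b) ⊗ₜ[ℂ] x := by
  simp [Phi]

lemma k_span_brackets :
    Submodule.span ℂ {m : 𝔨 | ∃ x y : 𝔨, ⁅x, y⁆ = m} = ⊤ := by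
  have htop : (⁅(⊤ : LieIdeal ℂ 𝔨), (⊤ : LieIdeal ℂ 𝔨)⁆ : LieIdeal ℂ 𝔨) = ⊤ := by
    rcases LieAlgebra.IsSimple.eq_bot_or_eq_top
      (⁅(⊤ : LieIdeal ℂ 𝔨), (⊤ : LieIdeal ℂ 𝔨)⁆ : LieIdeal ℂ 𝔨) with h | h
    · exfalso
      apply LieAlgebra.IsSimple.non_abelian (R := ℂ) (L := 𝔨)
      constructor
      intro x y
      have hm : ⁅x, y⁆ ∈ (⁅(⊤ : LieIdeal ℂ 𝔨), (⊤ : LieIdeal ℂ 𝔨)⁆ : LieIdeal ℂ 𝔨) :=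
        LieSubmodule.lie_mem_lie trivial trivial
      rw [h] at hm
      simpa using hm
    · exact h
  have hspan := LieSubmodule.lieIdeal_oper_eq_linear_span' (R := ℂ) (L := 𝔨) (M := 𝔨)
    (I := ⊤) (N := (⊤ : LieIdeal ℂ 𝔨))
  rw [htop] at hspan
  have hset : {m : 𝔨 | ∃ x ∈ (⊤ : LieIdeal ℂ 𝔨), ∃ n ∈ (⊤ : LieIdeal ℂ 𝔨), ⁅x, n⁆ = m}
      = {m : 𝔨 | ∃ x y : 𝔨, ⁅x, y⁆ = m} := by
    ext m
    simp
  rw [hset] at hspan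
  rw [← hspan]
  simp

lemma perfect :
    Submodule.span ℂ {z : A ⊗[ℂ] 𝔨 | ∃ x y : A ⊗[ℂ] 𝔨, ⁅x, y⁆ = z} = ⊤ := by
  rw [eq_top_iff]
  rintro z -
  induction z using TensorProduct.induction_on with
  | zero => exact Submodule.zero_mem _
  | tmul a x =>
      have hx : x ∈ Submodule.span ℂ {m : 𝔨 | ∃ u v : 𝔨, ⁅u, v⁆ = m} := by
        rw [k_span_brackets]; trivial
      refine Submodule.span_induction
        (p := fun m _ => a ⊗ₜ[ℂ] m ∈
          Submodule.span ℂ {z : A ⊗[ℂ] 𝔨 | ∃ x y : A ⊗[ℂ] 𝔨, ⁅x, y⁆ = z})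
        ?_ ?_ ?_ ?_ hx
      · rintro m ⟨u, v, rfl⟩
        apply Submodule.subset_span
        exact ⟨a ⊗ₜ[ℂ] u, (1 : A) ⊗ₜ[ℂ] v, by
          rw [LieAlgebra.ExtendScalars.bracket_tmul, mul_one]⟩
      · simp
      · intro m n _ _ hm hn
        rw [TensorProduct.tmul_add]
        exact Submodule.add_mem _ hm hn
      · intro t m _ hm
        rw [TensorProduct.tmul_smul]
        exact Submodule.smul_mem _ t hm
  | add u v hu hv => exact Submodule.add_mem _ hu hv

lemma centerfree (z : A ⊗[ℂ] 𝔨) (hz : ∀ y : A ⊗[ℂ] 𝔨, ⁅z, y⁆ = 0) : z = 0 := by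
  let bA := Module.finBasis ℂ A
  have hP : ∀ i, P bA i z = 0 := by
    intro i
    have hmem : P bA i z ∈ LieModule.maxTrivSubmodule ℂ 𝔨 𝔨 := by
      rw [LieModule.mem_maxTrivSubmodule]
      intro y
      have h0 : ⁅(1 : A) ⊗ₜ[ℂ] y, z⁆ = 0 := by
        rw [← lie_skew, hz, neg_zero]
      calc ⁅y, P bA i z⁆ = P bA i ⁅(1 : A) ⊗ₜ[ℂ] y, z⁆ := (P_lie bA i y z).symm
        _ = 0 := by rw [h0, map_zero]
    have hcen : P bA i z ∈ LieAlgebra.center ℂ 𝔨 := hmem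
    rw [LieAlgebra.center_eq_bot ℂ 𝔨] at hcen
    simpa using hcen
  rw [← sum_P bA z]
  simp [hP]

end Stmt7Aux

open Stmt7Aux in
/-- Let `𝔨` be a finite-dimensional simple complex Lie algebra and `A` a finite-dimensional
commutative associative unital `ℂ`-algebra.  The base change `A ⊗[ℂ] 𝔨`, with the Lie bracket
determined by `⁅a ⊗ x, b ⊗ y⁆ = (a*b) ⊗ ⁅x,y⁆` (Mathlib's instance), is perfect and
centerfree, and `a ↦ (b ⊗ x ↦ (a*b) ⊗ x)` is an isomorphism of associative `ℂ`-algebras from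
`A` onto the centroid of `A ⊗[ℂ] 𝔨`. -/
theorem stmt_7 {𝔨 A : Type*} [LieRing 𝔨] [LieAlgebra ℂ 𝔨] [FiniteDimensional ℂ 𝔨]
    [LieAlgebra.IsSimple ℂ 𝔨] [CommRing A] [Algebra ℂ A] [FiniteDimensional ℂ A] :
    (Submodule.span ℂ {z : A ⊗[ℂ] 𝔨 | ∃ x y : A ⊗[ℂ] 𝔨, ⁅x, y⁆ = z} = ⊤) ∧
    (∀ z : A ⊗[ℂ] 𝔨, (∀ y : A ⊗[ℂ] 𝔨, ⁅z, y⁆ = 0) → z = 0) ∧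
    ∃ Φ : A →ₐ[ℂ] Module.End ℂ (A ⊗[ℂ] 𝔨),
      (∀ (a b : A) (x : 𝔨), Φ a (b ⊗ₜ[ℂ] x) = (a * b) ⊗ₜ[ℂ] x) ∧
      Function.Injective Φ ∧
      Set.range Φ =
        {f : Module.End ℂ (A ⊗[ℂ] 𝔨) | ∀ x y : A ⊗[ℂ] 𝔨, f ⁅x, y⁆ = ⁅x, f y⁆} := by
  refine ⟨perfect, fun z hz => centerfree z hz, Phi, fun a b x => Phi_tmul a b x, ?_, ?_⟩
  · intro a a' h
    have : Nontrivial 𝔨 := nontrivial_k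
    obtain ⟨x, hx⟩ := exists_ne (0 : 𝔨)
    have h1 : (a * 1) ⊗ₜ[ℂ] x = (a' * 1) ⊗ₜ[ℂ] x := by
      rw [← Phi_tmul a 1 x, ← Phi_tmul a' 1 x, h]
    rw [mul_one, mul_one] at h1
    exact tmul_right_cancel hx h1
  · ext f
    simp only [Set.mem_range, Set.mem_setOf_eq]
    constructor
    · rintro ⟨a, rfl⟩ u v
      induction u using TensorProduct.induction_on with
      | zero => simp
      | tmul b x =>
          induction v using TensorProduct.induction_on with
          | zero => simp
          | tmul c y =>
              rw [LieAlgebra.ExtendScalars.bracket_tmul, Phi_tmul, Phi_tmul,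
                LieAlgebra.ExtendScalars.bracket_tmul]
              congr 1
              ring
          | add p q hp hq => simp only [lie_add, map_add, hp, hq]
      | add p q hp hq => simp only [add_lie, map_add, hp, hq]
    · intro hf
      obtain ⟨a, ha⟩ := centroid_mem f hf
      refine ⟨a, ?_⟩
      apply TensorProduct.ext'
      intro b x
      rw [Phi_tmul, ha]
end

section
/- Let M be a finite-dimensional smooth manifold without boundary that is Hausdorff, σ-compact, connected and of positive dimension, and let C^∞(M,ℝ) be the ℝ-algebra of smooth real-valued functions on M with pointwise operations. If I is an ideal of C^∞(M,ℝ) of codimension 1 (i.e. I ≠ C^∞(M,ℝ) and I together with the constant function 1 spans C^∞(M,ℝ)), then there exists a unique point x ∈ M such that I = {f ∈ C^∞(M,ℝ) : f(x) = 0}. -/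
open scoped Manifold
open Set Function

/-- Let `M` be a smooth manifold without boundary (modelled on `ℝ^n`, `n > 0`) that is
Hausdorff, σ-compact and connected.  Every ideal of codimension `1` of the `ℝ`-algebra
`C^∞(M,ℝ)` (i.e. a proper ideal which together with the constant function `1` spans
`C^∞(M,ℝ)` over `ℝ`) is the vanishing ideal of a unique point of `M`. -/
theorem stmt_9 {n : ℕ} (hn : 0 < n) {M : Type*} [TopologicalSpace M]
    [ChartedSpace (EuclideanSpace ℝ (Fin n)) M] [IsManifold (𝓡 n) (⊤ : ℕ∞) M]
    [T2Space M] [SigmaCompactSpace M] [ConnectedSpace M]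
    (I : Ideal (ContMDiffMap (𝓡 n) 𝓘(ℝ, ℝ) M ℝ (⊤ : ℕ∞)))
    (hproper : I ≠ ⊤)
    (hcodim : ∀ f : ContMDiffMap (𝓡 n) 𝓘(ℝ, ℝ) M ℝ (⊤ : ℕ∞),
      ∃ g ∈ I, ∃ c : ℝ, f = g + c • (1 : ContMDiffMap (𝓡 n) 𝓘(ℝ, ℝ) M ℝ (⊤ : ℕ∞))) :
    ∃! x : M, ∀ f : ContMDiffMap (𝓡 n) 𝓘(ℝ, ℝ) M ℝ (⊤ : ℕ∞), f ∈ I ↔ f x = 0 := by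
  classical
  haveI : LocallyCompactSpace M :=
    ChartedSpace.locallyCompactSpace (EuclideanSpace ℝ (Fin n)) M
  set K : CompactExhaustion M := CompactExhaustion.choice M with hK
  have hex : ∀ m : ℕ, ∃ f : ContMDiffMap (𝓡 n) 𝓘(ℝ, ℝ) M ℝ (⊤ : ℕ∞),
      EqOn f 0 (K m) ∧ EqOn f 1 (interior (K (m+1)))ᶜ ∧ ∀ x, f x ∈ Icc (0:ℝ) 1 :=
    fun m => exists_contMDiffMap_zero_one_of_isClosed (𝓡 n) (K.isCompact m).isClosed
      isOpen_interior.isClosed_compl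
      (Set.disjoint_left.2 fun x hx hx' => hx' (K.subset_interior_succ m hx))
  choose f hf0 hf1 hf01 using hex
  -- local finiteness of supports
  have hlf : LocallyFinite fun m : ℕ => support fun x => f m x := by
    intro x
    obtain ⟨m, hm⟩ := K.exists_mem x
    refine ⟨interior (K (m+1)), isOpen_interior.mem_nhds (K.subset_interior_succ m hm), ?_⟩
    apply Set.Finite.subset (Set.finite_Iio (m+1))
    rintro j ⟨y, hy, hy'⟩
    by_contra hj
    rw [Set.mem_Iio, not_lt] at hj
    exact hy (hf0 j (K.subset (by simpa using hj) (interior_subset hy')))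
  have hφsmooth : ContMDiff (𝓡 n) 𝓘(ℝ, ℝ) (⊤ : ℕ∞) fun x : M => ∑ᶠ m, f m x :=
    contMDiff_finsum (fun m => (f m).contMDiff) hlf
  set φ : ContMDiffMap (𝓡 n) 𝓘(ℝ, ℝ) M ℝ (⊤ : ℕ∞) := ⟨fun x => ∑ᶠ m, f m x, hφsmooth⟩ with hφdef
  have hbound : ∀ (m : ℕ) (x : M), x ∉ K m → (m : ℝ) ≤ φ x := by
    intro m x hx
    have hfin : (support fun j => f j x).Finite := hlf.point_finite x
    have h1 : ∀ j < m, f j x = 1 := by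
      intro j hj
      refine hf1 j fun hx' => hx (K.subset hj (interior_subset hx'))
    have hsub : Finset.range m ⊆ hfin.toFinset := by
      intro j hj
      simp only [Set.Finite.mem_toFinset, mem_support, h1 j (Finset.mem_range.1 hj)]
      norm_num
    have hsum : ∑ j ∈ Finset.range m, f j x = m := by
      rw [Finset.sum_congr rfl fun j hj => h1 j (Finset.mem_range.1 hj)]
      simp
    calc (m:ℝ) = ∑ j ∈ Finset.range m, f j x := hsum.symm
      _ ≤ ∑ j ∈ hfin.toFinset, f j x :=
          Finset.sum_le_sum_of_subset_of_nonneg hsub (fun j _ _ => (hf01 j x).1)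
      _ = φ x := (finsum_eq_sum _ hfin).symm
  obtain ⟨g, hgI, c, hφg⟩ := hcodim φ
  obtain ⟨m₀, hm₀⟩ := exists_nat_gt c
  have hgval : ∀ x, g x = φ x - c := by
    intro x
    have := DFunLike.congr_fun hφg x
    simp at this
    linarith
  have hZ : {x : M | (g : M → ℝ) x = 0} ⊆ K m₀ := by
    intro x hx
    by_contra hxK
    have h1 := hbound m₀ x hxK
    have h2 := hgval x
    simp only [Set.mem_setOf_eq] at hx
    linarith
  have hZc : IsCompact {x : M | (g : M → ℝ) x = 0} :=
    (K.isCompact m₀).of_isClosed_subset (isClosed_eq g.contMDiff.continuous continuous_const) hZ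
  have hexist : ∃ x : M, ∀ f ∈ I, (f : ContMDiffMap (𝓡 n) 𝓘(ℝ, ℝ) M ℝ (⊤ : ℕ∞)) x = 0 := by
    by_contra hcon
    push_neg at hcon
    choose p hpI hpx using hcon
    obtain ⟨t, htZ, htc⟩ := hZc.elim_nhds_subcover (fun x => {y | (p x) y ≠ 0})
      (fun x _ => ((isClosed_eq (p x).contMDiff.continuous continuous_const).isOpen_compl).mem_nhds (hpx x))
    set h : ContMDiffMap (𝓡 n) 𝓘(ℝ, ℝ) M ℝ (⊤ : ℕ∞) := g * g + ∑ x ∈ t, p x * p x with hdef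
    have hhI : h ∈ I := I.add_mem (I.mul_mem_left g hgI)
      (Ideal.sum_mem I fun x _ => I.mul_mem_left _ (hpI x))
    have hval : ∀ y, (h : M → ℝ) y = g y * g y + ∑ x ∈ t, p x y * p x y := by
      intro y
      have hmap := map_sum (ContMDiffMap.evalRingHom y :
          ContMDiffMap (𝓡 n) 𝓘(ℝ, ℝ) M ℝ (⊤ : ℕ∞) →+* ℝ) (fun x => p x * p x) t
      have heval : ∀ q : ContMDiffMap (𝓡 n) 𝓘(ℝ, ℝ) M ℝ (⊤ : ℕ∞),
          ContMDiffMap.evalRingHom y q = q y := fun q => rfl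
      simp only [heval, map_mul] at hmap
      calc (h : M → ℝ) y = g y * g y + (∑ x ∈ t, p x * p x :
              ContMDiffMap (𝓡 n) 𝓘(ℝ, ℝ) M ℝ (⊤ : ℕ∞)) y := by simp [hdef]
        _ = g y * g y + ∑ x ∈ t, p x y * p x y := by rw [← heval, hmap]; simp [ContMDiffMap.coe_mul]
    have hpos : ∀ y, (h : M → ℝ) y ≠ 0 := by
      intro y
      rw [hval]
      rcases eq_or_ne (g y) 0 with hgy | hgy
      · obtain ⟨x, hxt, hxy⟩ : ∃ x ∈ t, (p x) y ≠ 0 := by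
          have := htc hgy
          simpa using this
        have hposs : 0 < ∑ x ∈ t, p x y * p x y :=
          Finset.sum_pos' (fun i _ => mul_self_nonneg _) ⟨x, hxt, mul_self_pos.2 hxy⟩
        positivity
      · have : 0 < g y * g y := mul_self_pos.2 hgy
        have : 0 ≤ ∑ x ∈ t, p x y * p x y :=
          Finset.sum_nonneg (fun i _ => mul_self_nonneg _)
        positivity
    set hinv : ContMDiffMap (𝓡 n) 𝓘(ℝ, ℝ) M ℝ (⊤ : ℕ∞) :=
      ⟨fun y => ((h : M → ℝ) y)⁻¹, h.contMDiff.inv₀ hpos⟩ with hinvdef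
    have hone : (1 : ContMDiffMap (𝓡 n) 𝓘(ℝ, ℝ) M ℝ (⊤ : ℕ∞)) = h * hinv := by
      ext y
      exact (mul_inv_cancel₀ (hpos y)).symm
    exact hproper (I.eq_top_iff_one.2 (hone ▸ I.mul_mem_right hinv hhI))
  obtain ⟨x₀, hx₀⟩ := hexist
  have hP : ∀ f : ContMDiffMap (𝓡 n) 𝓘(ℝ, ℝ) M ℝ (⊤ : ℕ∞), f ∈ I ↔ f x₀ = 0 := by
    intro f
    refine ⟨fun hf => hx₀ f hf, fun hfx => ?_⟩
    obtain ⟨g', hg'I, c', rfl⟩ := hcodim f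
    have h1 : (g' : M → ℝ) x₀ = 0 := hx₀ g' hg'I
    have h2 : c' = 0 := by
      have := hfx
      simp [h1] at this
      simpa using this
    simpa [h2] using hg'I
  refine ⟨x₀, hP, ?_⟩
  intro y hy
  by_contra hne
  obtain ⟨b, hb0, hb1, _⟩ := exists_contMDiffMap_zero_one_of_isClosed (𝓡 n)
    (isClosed_singleton (x := y)) (isClosed_singleton (x := x₀))
    (Set.disjoint_singleton.2 hne)
  have hbI : b ∈ I := (hy b).2 (hb0 rfl)
  have : (b : M → ℝ) x₀ = 1 := hb1 rfl
  rw [hx₀ b hbI] at this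
  exact zero_ne_one this
end

section
/- Let M and N be finite-dimensional smooth manifolds without boundary, each Hausdorff, σ-compact, connected and of positive dimension. For every isomorphism of ℝ-algebras v : C^∞(M,ℝ) → C^∞(N,ℝ) there exists a unique diffeomorphism λ : M → N such that v(f) = f ∘ λ⁻¹ for all f ∈ C^∞(M,ℝ). -/
open scoped Manifold
open Set Function TopologicalSpace
open scoped Topology

section Aux

variable {m : ℕ} {M : Type*} [TopologicalSpace M] [ChartedSpace (EuclideanSpace ℝ (Fin m)) M]
  [IsManifold (𝓡 m) (⊤ : ℕ∞) M] [T2Space M] [SigmaCompactSpace M]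

/-- A smooth exhaustion function: sublevel sets are compact. -/
lemma exists_smooth_exhaustion :
    ∃ h : ContMDiffMap (𝓡 m) 𝓘(ℝ, ℝ) M ℝ (⊤ : ℕ∞), ∀ c : ℝ, IsCompact {x : M | h x ≤ c} := by
  haveI : LocallyCompactSpace M := Manifold.locallyCompact_of_finiteDimensional (𝓡 m)
  set K : CompactExhaustion M := CompactExhaustion.choice M
  have hdisj : ∀ k : ℕ, Disjoint ((interior (K (k+1)))ᶜ) (K k) := fun k =>
    Set.disjoint_left.mpr fun x hx hx' => hx (K.subset_interior_succ k hx')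
  choose f hf0 hf1 hf01 using fun k : ℕ =>
    exists_contMDiffMap_zero_one_of_isClosed (𝓡 m) (n := (⊤ : ℕ∞)) (isOpen_interior.isClosed_compl)
      (K.isCompact (k)).isClosed (hdisj k)
  set g : ℕ → M → ℝ := fun k x => 1 - f k x with hg
  have hgsupp : ∀ k, support (g k) ⊆ (K k)ᶜ := by
    intro k x hx hxK
    exact hx (by simp [hg, hf1 k hxK])
  have hlf : LocallyFinite fun k => support (g k) := by
    intro x
    rcases K.exists_mem x with ⟨u, hu⟩
    refine ⟨interior (K (u+1)), isOpen_interior.mem_nhds (K.subset_interior_succ u hu), ?_⟩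
    apply Set.Finite.subset (Set.finite_Iio (u+1))
    intro k hk
    by_contra hk'
    simp only [Set.mem_Iio, not_lt] at hk'
    rcases hk with ⟨y, hy1, hy2⟩
    exact hgsupp k hy1 (K.subset hk' (interior_subset hy2))
  have hgsmooth : ∀ k, ContMDiff (𝓡 m) 𝓘(ℝ, ℝ) (⊤ : ℕ∞) (g k) :=
    fun k => contMDiff_const.sub (f k).contMDiff
  have hsm : ContMDiff (𝓡 m) 𝓘(ℝ, ℝ) (⊤ : ℕ∞) (fun x => ∑ᶠ k, g k x) := contMDiff_finsum hgsmooth hlf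
  refine ⟨⟨_, hsm⟩, fun c => ?_⟩
  have hgnn : ∀ k x, 0 ≤ g k x := fun k x => by
    have := (hf01 k x).2; simp [hg]; linarith
  have key : ∀ (N : ℕ) (x : M), x ∉ K N → (N : ℝ) ≤ ∑ᶠ k, g k x := by
    intro N x hx
    have h1 : ∀ k < N, g k x = 1 := by
      intro k hk
      have hxk : x ∉ interior (K (k+1)) := by
        intro hmem
        exact hx (K.subset hk (interior_subset hmem))
      simp [hg, hf0 k hxk]
    have hfin : (support fun k => g k x).Finite := hlf.point_finite x
    have hsub : (support fun k => g k x) ⊆ ↑(hfin.toFinset ∪ Finset.range N) := by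
      intro k hk; simp only [Finset.coe_union, Set.mem_union, Finset.coe_range, Set.mem_Iio]; exact Or.inl (by simpa using hfin.mem_toFinset.mpr hk)
    rw [finsum_eq_sum_of_support_subset _ hsub]
    calc (N : ℝ) = ∑ k ∈ Finset.range N, g k x := by
          rw [Finset.sum_congr rfl fun k hk => h1 k (Finset.mem_range.mp hk)]; simp
      _ ≤ _ := Finset.sum_le_sum_of_subset_of_nonneg (Finset.subset_union_right)
          (fun i _ _ => hgnn i x)
  refine IsCompact.of_isClosed_subset (K.isCompact (⌈c⌉₊ + 1))
    (isClosed_le (hsm.continuous) continuous_const) ?_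
  intro x hx
  by_contra hxK
  have := key (⌈c⌉₊ + 1) x hxK
  have hc : c ≤ ⌈c⌉₊ := Nat.le_ceil c
  have : (⌈c⌉₊ + 1 : ℝ) ≤ c := le_trans (by push_cast; rfl) (le_trans this hx)
  push_cast at this; linarith

/-- Smooth functions separate points. -/
lemma smooth_separates {x y : M} (h : ∀ f : ContMDiffMap (𝓡 m) 𝓘(ℝ, ℝ) M ℝ (⊤ : ℕ∞), f x = f y) :
    x = y := by
  by_contra hxy
  obtain ⟨f, hf0, hf1, -⟩ := exists_contMDiffMap_zero_one_of_isClosed (𝓡 m) (n := (⊤ : ℕ∞))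
    (isClosed_singleton (x := x)) (isClosed_singleton (x := y))
    (Set.disjoint_singleton.mpr hxy)
  have := h f
  rw [hf0 rfl, hf1 rfl] at this
  simpa using this

/-- Evaluation at a point as an `ℝ`-algebra homomorphism. -/
noncomputable def evalH (x : M) : ContMDiffMap (𝓡 m) 𝓘(ℝ, ℝ) M ℝ (⊤ : ℕ∞) →ₐ[ℝ] ℝ where
  toFun f := f x
  map_one' := rfl
  map_mul' _ _ := rfl
  map_zero' := rfl
  map_add' _ _ := rfl
  commutes' _ := rfl

/-- Every ℝ-algebra homomorphism `C^∞(M) → ℝ` is evaluation at a point. -/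
lemma alghom_eq_eval (φ : ContMDiffMap (𝓡 m) 𝓘(ℝ, ℝ) M ℝ (⊤ : ℕ∞) →ₐ[ℝ] ℝ) :
    ∃ x : M, ∀ f : ContMDiffMap (𝓡 m) 𝓘(ℝ, ℝ) M ℝ (⊤ : ℕ∞), φ f = f x := by
  obtain ⟨h, hK⟩ := exists_smooth_exhaustion (m := m) (M := M)
  -- a function that vanishes nowhere is a unit, so φ of it is nonzero
  have unit : ∀ f : ContMDiffMap (𝓡 m) 𝓘(ℝ, ℝ) M ℝ (⊤ : ℕ∞), (∀ x, f x ≠ 0) → φ f ≠ 0 := by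
    intro f hf
    have : f * ⟨fun x => (f x)⁻¹, f.contMDiff.inv₀ hf⟩ = 1 := by
      ext x
      exact mul_inv_cancel₀ (hf x)
    intro h0
    have := congrArg φ this
    have hm := map_mul φ f ⟨fun x => (f x)⁻¹, f.contMDiff.inv₀ hf⟩
    rw [map_one] at this
    rw [h0, zero_mul] at hm
    exact zero_ne_one (hm.symm.trans this)
  set c : ℝ := φ h with hc
  set K' : Set M := {x | h x = c} with hK'
  have hK'c : IsCompact K' :=
    IsCompact.of_isClosed_subset (hK c) (isClosed_eq h.contMDiff.continuous continuous_const)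
      (fun x hx => le_of_eq hx)
  set ι := {f : ContMDiffMap (𝓡 m) 𝓘(ℝ, ℝ) M ℝ (⊤ : ℕ∞) // φ f = 0} with hι
  have main : (K' ∩ ⋂ f : ι, {x | f.1 x = 0}).Nonempty := by
    refine hK'c.inter_iInter_nonempty _ (fun f => isClosed_eq f.1.contMDiff.continuous
      continuous_const) (fun u => ?_)
    set g : ContMDiffMap (𝓡 m) 𝓘(ℝ, ℝ) M ℝ (⊤ : ℕ∞) :=
      (h - algebraMap ℝ _ c) ^ 2 + ∑ f ∈ u, f.1 ^ 2 with hgdef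
    have hφg : φ g = 0 := by
      simp only [hgdef, map_add, map_pow, map_sum, map_sub, AlgHom.commutes]
      simp [hc, fun f : ι => f.2]
    have hgx : ∀ x : M, g x = (h x - c) ^ 2 + ∑ f ∈ u, (f.1 x) ^ 2 := by
      intro x
      have : g x = evalH x g := rfl
      rw [this, hgdef]
      simp only [map_add, map_pow, map_sum, map_sub, AlgHom.commutes]
      rfl
    have : ∃ x : M, g x = 0 := by
      by_contra hg
      push_neg at hg
      exact unit g hg hφg
    obtain ⟨x, hx⟩ := this
    rw [hgx] at hx
    have h1 : (h x - c) ^ 2 = 0 ∧ ∑ f ∈ u, (f.1 x) ^ 2 = 0 := by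
      constructor <;> nlinarith [sq_nonneg (h x - c),
        Finset.sum_nonneg (fun (f : ι) (_ : f ∈ u) => sq_nonneg (f.1 x))]
    refine ⟨x, ?_, ?_⟩
    · have := h1.1; simp only [hK', Set.mem_setOf_eq]; nlinarith
    · simp only [Set.mem_iInter]
      intro f
      intro hfu
      have := (Finset.sum_eq_zero_iff_of_nonneg
        (fun (f : ι) (_ : f ∈ u) => sq_nonneg (f.1 x))).mp h1.2 f hfu
      simpa using this
  obtain ⟨x, -, hx⟩ := main
  refine ⟨x, fun f => ?_⟩
  have hsub : φ (f - algebraMap ℝ _ (φ f)) = 0 := by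
    simp [map_sub]
  have := Set.mem_iInter.mp hx ⟨f - algebraMap ℝ _ (φ f), hsub⟩
  simp only [Set.mem_setOf_eq] at this
  have heval : (f - algebraMap ℝ _ (φ f)) x = f x - φ f := rfl
  rw [heval] at this
  linarith

variable {n : ℕ} {N : Type*} [TopologicalSpace N] [ChartedSpace (EuclideanSpace ℝ (Fin n)) N]
  [IsManifold (𝓡 n) (⊤ : ℕ∞) N]

/-- If all compositions with smooth functions are smooth, the map is continuous. -/
lemma continuous_of_comp_smooth (σ : N → M)
    (hσ : ∀ f : ContMDiffMap (𝓡 m) 𝓘(ℝ, ℝ) M ℝ (⊤ : ℕ∞),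
      ContMDiff (𝓡 n) 𝓘(ℝ, ℝ) (⊤ : ℕ∞) (fun y => f (σ y))) : Continuous σ := by
  rw [continuous_iff_continuousAt]
  intro y₀
  rw [continuousAt_def]
  intro A hA
  obtain ⟨U, hUA, hU, hxU⟩ := mem_nhds_iff.mp hA
  obtain ⟨f, hf0, hf1, -⟩ := exists_contMDiffMap_zero_one_of_isClosed (𝓡 m) (n := (⊤ : ℕ∞))
    (hU.isClosed_compl) (isClosed_singleton (x := σ y₀))
    (Set.disjoint_left.mpr fun x hx hx' => hx (by rwa [Set.mem_singleton_iff.mp hx']))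
  have hop : IsOpen {y : N | f (σ y) ≠ 0} :=
    isOpen_compl_iff.mpr <| (isClosed_singleton (x := (0:ℝ))).preimage (hσ f).continuous
  have hy₀ : y₀ ∈ {y : N | f (σ y) ≠ 0} := by
    simp only [Set.mem_setOf_eq, hf1 rfl]
    norm_num
  refine Filter.mem_of_superset (hop.mem_nhds hy₀) ?_
  intro y hy
  simp only [Set.mem_setOf_eq] at hy
  have hmem : σ y ∈ U := by
    by_contra hyU
    exact hy (hf0 hyU)
  exact hUA hmem


lemma contMDiff_of_comp_smooth (σ : N → M)
    (hσ : ∀ f : ContMDiffMap (𝓡 m) 𝓘(ℝ, ℝ) M ℝ (⊤ : ℕ∞),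
      ContMDiff (𝓡 n) 𝓘(ℝ, ℝ) (⊤ : ℕ∞) (fun y => f (σ y))) : ContMDiff (𝓡 n) (𝓡 m) (⊤ : ℕ∞) σ := by
  haveI : LocallyCompactSpace M := Manifold.locallyCompact_of_finiteDimensional (𝓡 m)
  haveI : MetrizableSpace M := Manifold.metrizableSpace (𝓡 m) M
  haveI : NormalSpace M := by
    letI : MetricSpace M := TopologicalSpace.metrizableSpaceMetric M
    infer_instance
  have hcont : Continuous σ := continuous_of_comp_smooth σ hσ
  intro y₀
  set x₀ : M := σ y₀ with hx₀
  set e := extChartAt (𝓡 m) x₀ with he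
  -- a compact neighborhood inside the chart source
  obtain ⟨K, hKnhds, hKsub, hKcomp⟩ := local_compact_nhds (extChartAt_source_mem_nhds (I := 𝓡 m) x₀)
  -- a cutoff function
  obtain ⟨χ, hχ0, hχ1, -⟩ := exists_contMDiffMap_zero_one_nhds_of_isClosed (𝓡 m) (n := (⊤ : ℕ∞))
    (isOpen_interior.isClosed_compl) (isClosed_singleton (x := x₀))
    (Set.disjoint_left.mpr fun x hx hx' => hx (by
      rw [Set.mem_singleton_iff.mp hx']
      exact mem_interior_iff_mem_nhds.mpr hKnhds))
  set F : M → EuclideanSpace ℝ (Fin m) := fun x => χ x • e x with hF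
  have hFsmooth : ContMDiff (𝓡 m) 𝓘(ℝ, EuclideanSpace ℝ (Fin m)) (⊤ : ℕ∞) F := by
    intro x
    by_cases hx : x ∈ interior K
    · have h1 : ContMDiffAt (𝓡 m) 𝓘(ℝ, ℝ) (⊤ : ℕ∞) χ x := χ.contMDiff x
      have h2 : ContMDiffAt (𝓡 m) 𝓘(ℝ, EuclideanSpace ℝ (Fin m)) (⊤ : ℕ∞) e x := by
        apply (contMDiffOn_extChartAt (n := (⊤:ℕ∞))).contMDiffAt
        rw [← extChartAt_source (𝓡 m) x₀]
        exact mem_nhds_iff.mpr ⟨interior K, (interior_mono hKsub).trans interior_subset,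
          isOpen_interior, hx⟩
      exact h1.smul h2
    · have hzero : ∀ᶠ x' in 𝓝 x, χ x' = 0 :=
        hχ0.filter_mono (nhds_le_nhdsSet (Set.mem_compl hx))
      have : F =ᶠ[𝓝 x] (fun _ => (0 : EuclideanSpace ℝ (Fin m))) := by
        filter_upwards [hzero] with x' hx'
        simp [hF, hx']
      exact (contMDiffAt_const (c := (0 : EuclideanSpace ℝ (Fin m)))).congr_of_eventuallyEq this
  have hFeq : ∀ᶠ x in 𝓝 x₀, F x = e x := by
    filter_upwards [hχ1.filter_mono (nhds_le_nhdsSet (Set.mem_singleton x₀))] with x hx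
    simp [hF, hx]
  -- F ∘ σ is smooth, since its components are compositions with global smooth functions
  have hFσ : ContMDiff (𝓡 n) 𝓘(ℝ, EuclideanSpace ℝ (Fin m)) (⊤ : ℕ∞) (fun y => F (σ y)) := by
    have hcomp : ∀ i : Fin m, ContMDiff (𝓡 n) 𝓘(ℝ, ℝ) (⊤ : ℕ∞) (fun y => F (σ y) i) := by
      intro i
      exact hσ ⟨fun x => F x i, (EuclideanSpace.proj (𝕜 := ℝ) i).contMDiff.comp hFsmooth⟩
    have hpi : ContMDiff (𝓡 n) 𝓘(ℝ, Fin m → ℝ) (⊤ : ℕ∞)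
        (fun y => (EuclideanSpace.equiv (Fin m) ℝ) (F (σ y))) := contMDiff_pi_space.mpr hcomp
    have := ((EuclideanSpace.equiv (Fin m) ℝ).symm.toContinuousLinearMap.contMDiff
      (n := (⊤:ℕ∞))).comp hpi
    simpa [Function.comp_def] using this
  rw [contMDiffAt_iff_target]
  refine ⟨hcont.continuousAt, ?_⟩
  have heq : (fun y => extChartAt (𝓡 m) (σ y₀) (σ y)) =ᶠ[𝓝 y₀] (fun y => F (σ y)) := by
    have := hcont.continuousAt (x := y₀) hFeq
    filter_upwards [this] with y hy
    exact (Set.mem_preimage.mp hy).symm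
  exact ((hFσ y₀).congr_of_eventuallyEq heq)

end Aux

/-- Let `M` and `N` be smooth boundaryless manifolds (modelled on `ℝ^m` and `ℝ^n` with
`m, n > 0`), Hausdorff, σ-compact and connected.  Every isomorphism of `ℝ`-algebras
`v : C^∞(M,ℝ) → C^∞(N,ℝ)` is induced by a unique diffeomorphism `λ : M → N` via
`v f = f ∘ λ⁻¹`. -/
theorem stmt_10 {m n : ℕ} (hm : 0 < m) (hn : 0 < n)
    {M : Type*} [TopologicalSpace M] [ChartedSpace (EuclideanSpace ℝ (Fin m)) M]
    [IsManifold (𝓡 m) (⊤ : ℕ∞) M] [T2Space M] [SigmaCompactSpace M] [ConnectedSpace M]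
    {N : Type*} [TopologicalSpace N] [ChartedSpace (EuclideanSpace ℝ (Fin n)) N]
    [IsManifold (𝓡 n) (⊤ : ℕ∞) N] [T2Space N] [SigmaCompactSpace N] [ConnectedSpace N]
    (v : ContMDiffMap (𝓡 m) 𝓘(ℝ, ℝ) M ℝ (⊤ : ℕ∞) ≃ₐ[ℝ] ContMDiffMap (𝓡 n) 𝓘(ℝ, ℝ) N ℝ (⊤ : ℕ∞)) :
    ∃! e : Diffeomorph (𝓡 m) (𝓡 n) M N (⊤ : ℕ∞),
      ∀ (f : ContMDiffMap (𝓡 m) 𝓘(ℝ, ℝ) M ℝ (⊤ : ℕ∞)) (y : N), v f y = f (e.symm y) := by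
  -- the point maps induced by characters
  choose σ hσ using fun y : N => alghom_eq_eval ((evalH (m := n) (M := N) y).comp v.toAlgHom)
  choose τ hτ using fun x : M => alghom_eq_eval ((evalH (m := m) (M := M) x).comp v.symm.toAlgHom)
  have hσ' : ∀ (y : N) (f : ContMDiffMap (𝓡 m) 𝓘(ℝ, ℝ) M ℝ (⊤ : ℕ∞)), v f y = f (σ y) := hσ
  have hτ' : ∀ (x : M) (g : ContMDiffMap (𝓡 n) 𝓘(ℝ, ℝ) N ℝ (⊤ : ℕ∞)), v.symm g x = g (τ x) := hτ
  have left : ∀ x : M, σ (τ x) = x := by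
    intro x
    refine smooth_separates (m := m) fun f => ?_
    have h1 := hσ' (τ x) f
    have h2 := hτ' x (v f)
    rw [v.symm_apply_apply] at h2
    rw [← h1, ← h2]
  have right : ∀ y : N, τ (σ y) = y := by
    intro y
    refine smooth_separates (m := n) fun g => ?_
    have h1 := hτ' (σ y) g
    have h2 := hσ' y (v.symm g)
    rw [v.apply_symm_apply] at h2
    rw [← h1, ← h2]
  have hσsmooth : ContMDiff (𝓡 n) (𝓡 m) (⊤ : ℕ∞) σ := by
    refine contMDiff_of_comp_smooth σ fun f => ?_
    have : (fun y => f (σ y)) = ⇑(v f) := funext fun y => (hσ' y f).symm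
    rw [this]
    exact (v f).contMDiff
  have hτsmooth : ContMDiff (𝓡 m) (𝓡 n) (⊤ : ℕ∞) τ := by
    refine contMDiff_of_comp_smooth τ fun g => ?_
    have : (fun x => g (τ x)) = ⇑(v.symm g) := funext fun x => (hτ' x g).symm
    rw [this]
    exact (v.symm g).contMDiff
  refine ⟨⟨⟨τ, σ, left, right⟩, hτsmooth, hσsmooth⟩, fun f y => hσ' y f, ?_⟩
  intro e' he'
  have hsymm : ∀ y : N, e'.symm y = σ y := by
    intro y
    refine smooth_separates (m := m) fun f => ?_
    rw [← he' f y, hσ' y f]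
  ext x
  have : e'.symm (e' x) = σ (e' x) := hsymm (e' x)
  rw [e'.symm_apply_apply] at this
  have := congrArg τ this
  rw [right] at this
  exact this.symm ▸ rfl
end

section
/- Let M be a finite-dimensional smooth manifold without boundary that is Hausdorff and σ-compact. Then the topology of M coincides with the initial topology induced by the family of all smooth functions M → ℝ; that is, the topology of M is the coarsest topology on the underlying set of M for which every f ∈ C^∞(M,ℝ) is continuous. -/
open scoped Manifold

/-- On a smooth boundaryless manifold `M` (modelled on `ℝ^n`), Hausdorff and σ-compact, the
manifold topology coincides with the initial topology induced by the family of all smooth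
real-valued functions on `M`. -/
theorem stmt_11 {n : ℕ} {M : Type*} [t : TopologicalSpace M]
    [ChartedSpace (EuclideanSpace ℝ (Fin n)) M] [IsManifold (𝓡 n) (⊤ : ℕ∞) M]
    [T2Space M] [SigmaCompactSpace M] :
    t = ⨅ f : {f : M → ℝ // ContMDiff (𝓡 n) 𝓘(ℝ, ℝ) (⊤ : ℕ∞) f},
          TopologicalSpace.induced (f : M → ℝ) inferInstance := by
  refine le_antisymm (le_iInf fun f => continuous_iff_le_induced.mp f.2.continuous) ?_
  intro U hU
  refine (@isOpen_iff_forall_mem_open M (⨅ f : {f : M → ℝ // ContMDiff (𝓡 n) 𝓘(ℝ, ℝ) (⊤ : ℕ∞) f},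
      TopologicalSpace.induced (f : M → ℝ) inferInstance) U).mpr fun x hx => ?_
  obtain ⟨f, hf0, hf1, -⟩ := exists_contMDiffMap_zero_one_of_isClosed (𝓡 n) (n := (⊤ : ℕ∞))
    (isClosed_compl_iff.mpr hU) (isClosed_singleton (x := x))
    (Set.disjoint_left.mpr fun y hy hy' => hy (hy' ▸ hx))
  refine ⟨(f : M → ℝ) ⁻¹' Set.Ioi 0, fun y hy => ?_, ?_, ?_⟩
  · by_contra h
    have := hf0 h
    simp only [Pi.zero_apply] at this
    simp [Set.mem_preimage, this] at hy
  · have : @IsOpen _ (TopologicalSpace.induced (f : M → ℝ) inferInstance)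
        ((f : M → ℝ) ⁻¹' Set.Ioi 0) := ⟨Set.Ioi 0, isOpen_Ioi, rfl⟩
    exact this.mono (iInf_le _ (⟨f, f.contMDiff⟩ : {f : M → ℝ // ContMDiff (𝓡 n) 𝓘(ℝ, ℝ) (⊤ : ℕ∞) f}))
  · have := hf1 rfl
    simp only [Pi.one_apply] at this
    simp [Set.mem_preimage, this]
end
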